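/- arXiv:1901.09849 — 2 statements merged into one kernel-verified Lean document; each statement's English description precedes it below -/
import Mathlib

section
/- The adaptive Gumbel family is identifiable: for α, α' > 0, if σ_α(x) = σ_{α'}(x) for all real x, then α = α'. -/
/-!
Evaluating at `x = 0` already pins down `α`: `1 - σ_α(0) = exp (-(log (1 + α) / α))`, and
`log (1 + u) / u` is the slope of the secant of the strictly concave `log` from `1` to `1 + u`,
hence strictly decreasing in `u > 0`.
-/

noncomputable def adaGumbel (α x : ℝ) : ℝ := 1 - (1 + α * Real.exp x) ^ (-(1/α))

open Real Set

theorem strictAntiOn_log_one_add_div_self :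
    StrictAntiOn (fun u : ℝ => log (1 + u) / u) (Ioi 0) := by
  intro u hu v hv huv
  have hsecant := strictConcaveOn_log_Ioi.secant_strict_mono (a := 1) (mem_Ioi.2 one_pos)
    (by simp only [mem_Ioi] at hu ⊢; linarith) (by simp only [mem_Ioi] at hv ⊢; linarith)
    (by simpa using hu.ne') (by simpa using hv.ne') (by linarith : 1 + u < 1 + v)
  simpa using hsecant

theorem one_sub_adaGumbel_zero {α : ℝ} (hα : 0 < α) :
    1 - adaGumbel α 0 = exp (-(log (1 + α) / α)) := by
  rw [adaGumbel, exp_zero, mul_one, sub_sub_cancel, rpow_def_of_pos (by linarith)]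
  ring_nf

theorem injOn_adaGumbel_zero : InjOn (fun α => adaGumbel α 0) (Ioi 0) := by
  intro α hα α' hα' h
  have hexp : exp (-(log (1 + α) / α)) = exp (-(log (1 + α') / α')) := by
    rw [← one_sub_adaGumbel_zero hα, ← one_sub_adaGumbel_zero hα']
    exact congrArg (1 - ·) h
  exact strictAntiOn_log_one_add_div_self.injOn hα hα' (neg_injective (exp_injective hexp))

theorem stmt5 (α α' : ℝ) (hα : 0 < α) (hα' : 0 < α')
    (h : ∀ x : ℝ, adaGumbel α x = adaGumbel α' x) : α = α' :=
  injOn_adaGumbel_zero hα hα' (h 0)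
end

section
/- For α, α' > 0, if (1/α)·log(1 + α z) = (1/α')·log(1 + α' z) for all z > 0, then α = α'. -/
open Filter Topology

lemma hasDerivAt_inv_mul_log_one_add_mul {β z : ℝ} (hβ : β ≠ 0) (hz : 1 + β * z ≠ 0) :
    HasDerivAt (fun z : ℝ => 1 / β * Real.log (1 + β * z)) (1 / (1 + β * z)) z := by
  have hlin : HasDerivAt (fun z : ℝ => 1 + β * z) β z := by
    simpa using ((hasDerivAt_id z).const_mul β).const_add 1
  exact ((hlin.log hz).const_mul (1 / β)).congr_deriv (by field_simp)

theorem stmt6 (α α' : ℝ) (hα : 0 < α) (hα' : 0 < α')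
    (h : ∀ z : ℝ, 0 < z → (1/α) * Real.log (1 + α * z) = (1/α') * Real.log (1 + α' * z)) :
    α = α' := by
  have heq : (fun z : ℝ => 1 / α * Real.log (1 + α * z))
      =ᶠ[𝓝 1] fun z : ℝ => 1 / α' * Real.log (1 + α' * z) := by
    filter_upwards [eventually_gt_nhds one_pos] with z hz using h z hz
  have hslope : 1 / (1 + α * 1) = 1 / (1 + α' * 1) :=
    ((hasDerivAt_inv_mul_log_one_add_mul hα.ne' (by linarith)).congr_of_eventuallyEq heq.symm).unique
      (hasDerivAt_inv_mul_log_one_add_mul hα'.ne' (by linarith))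
  field_simp at hslope
  linarith
end
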